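/- Let L₀ be the operator on functions on 𝕊¹ given by L₀σ = −(1/4)∂_θX_c · H(∂_θ(σ ∂_θX_c)) + (1/8π)∫_{𝕊¹} σ(θ')dθ', where X_c(θ) = (cosθ, sinθ) and H is the componentwise periodic Hilbert transform. Then for every n ≥ 1, L₀(sin(nθ)) = −(n/4) sin(nθ) and L₀(cos(nθ)) = −(n/4) cos(nθ), and L₀(1) = 0. -/

import Mathlib

open Real

noncomputable section

abbrev E2 := EuclideanSpace ℝ (Fin 2)

/-- The unit circle `X_c(θ) = (cos θ, sin θ)`. -/
noncomputable def Xc (θ : ℝ) : E2 :=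
  (WithLp.equiv 2 (Fin 2 → ℝ)).symm ![Real.cos θ, Real.sin θ]

/-- Its tangent `∂_θX_c(θ) = (−sin θ, cos θ)`. -/
noncomputable def dXc (θ : ℝ) : E2 :=
  (WithLp.equiv 2 (Fin 2 → ℝ)).symm ![-Real.sin θ, Real.cos θ]

/-- The componentwise periodic Hilbert transform
`(HF)(θ) = (1/2π) p.v.∫_{𝕊¹} cot((θ−θ')/2)F(θ')dθ'`, written as the (absolutely
convergent, for `C¹` data) symmetrized integral. -/
noncomputable def HilV (F : ℝ → E2) (θ : ℝ) : E2 :=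
  (1 / (2 * π)) • ∫ t in (0 : ℝ)..π, Real.cot (t / 2) • (F (θ - t) - F (θ + t))

/-- The unit-circle tension operator
`L₀σ = −(1/4)∂_θX_c · H(∂_θ(σ∂_θX_c)) + (1/8π)∫σ dθ'`. -/
noncomputable def L0 (σ : ℝ → ℝ) (θ : ℝ) : ℝ :=
  -(1 / 4) * (inner ℝ (dXc θ)
      (HilV (fun φ => deriv (fun ψ => σ ψ • dXc ψ) φ) θ) : ℝ)
    + (1 / (8 * π)) * ∫ φ in (0 : ℝ)..(2 * π), σ φ

/-!
For `k ≥ 1` the kernel identity `cot (t/2) · sin (k t) = ∑_{j<k} (cos (j t) + cos ((j+1) t))`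
(telescoping `cot u · (sin (y+u) − sin (y−u)) = cos (y−u) + cos (y+u)`) integrates to `π` over
`(0, π)`, so the Hilbert transform sends `cos (kφ + α)` to `sin (kθ + α)`. For
`σ = cos (nφ + α)`, product-to-sum splits both components of `∂(σ ∂X_c) = σ' ∂X_c − σ X_c` into
the modes `n − 1` and `n + 1`; their transforms pair with `∂X_c(θ)` to `n cos (nθ + α)`, and the
mean of `σ` vanishes. Sine is the phase `α = −π/2`. For `σ = 1` the Hilbert term contributes
`−1/4` and the mean term `+1/4`.
-/

open MeasureTheory

theorem cot_mul_sin_add_sub_sin_sub {u : ℝ} (hu : sin u ≠ 0) (y : ℝ) :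
    cot u * (sin (y + u) - sin (y - u)) = cos (y - u) + cos (y + u) := by
  rw [cot_eq_cos_div_sin, sin_add, sin_sub, cos_add, cos_sub]
  field_simp
  ring

theorem cot_half_mul_sin_nat_mul {t : ℝ} (ht : sin (t / 2) ≠ 0) (k : ℕ) :
    cot (t / 2) * sin (k * t) = ∑ j ∈ Finset.range k, (cos (j * t) + cos ((j + 1) * t)) := by
  induction k with
  | zero => simp
  | succ k ih =>
    have step := cot_mul_sin_add_sub_sin_sub ht ((k + 1 / 2) * t)
    rw [show (k + 1 / 2) * t + t / 2 = (k + 1) * t by ring,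
      show (k + 1 / 2) * t - t / 2 = k * t by ring] at step
    rw [Finset.sum_range_succ, ← ih, Nat.cast_succ, ← step]
    ring

theorem eqOn_cot_half_mul_sin_nat_mul (k : ℕ) :
    Set.EqOn (fun t => cot (t / 2) * sin (k * t))
      (fun t => ∑ j ∈ Finset.range k, (cos (j * t) + cos ((j + 1) * t))) (Set.uIoc 0 π) := by
  intro t ht
  rw [Set.uIoc_of_le pi_pos.le] at ht
  exact cot_half_mul_sin_nat_mul (sin_pos_of_pos_of_lt_pi (by linarith [ht.1])
    (by linarith [ht.2, pi_pos])).ne' k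

theorem intervalIntegrable_cot_half_mul_sin_nat_mul (k : ℕ) :
    IntervalIntegrable (fun t => cot (t / 2) * sin (k * t)) volume 0 π :=
  (intervalIntegrable_congr (eqOn_cot_half_mul_sin_nat_mul k)).mpr
    (Continuous.intervalIntegrable (by fun_prop) _ _)

theorem integral_cos_nat_mul (j : ℕ) :
    ∫ t in (0 : ℝ)..π, cos (j * t) = if j = 0 then π else 0 := by
  split_ifs with hj
  · simp [hj]
  · rw [intervalIntegral.integral_comp_mul_left (fun x => cos x) (Nat.cast_ne_zero.mpr hj),
      integral_cos]
    simp [sin_nat_mul_pi]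

theorem integral_cot_half_mul_sin_nat_mul {k : ℕ} (hk : k ≠ 0) :
    ∫ t in (0 : ℝ)..π, cot (t / 2) * sin (k * t) = π := by
  have hsummand (j : ℕ) :
      ∫ t in (0 : ℝ)..π, (cos (j * t) + cos ((j + 1) * t)) = if j = 0 then π else 0 := by
    rw [intervalIntegral.integral_add (by apply Continuous.intervalIntegrable; fun_prop)
      (by apply Continuous.intervalIntegrable; fun_prop), integral_cos_nat_mul, ← Nat.cast_succ,
      integral_cos_nat_mul, if_neg j.succ_ne_zero, add_zero]
  rw [intervalIntegral.integral_congr_ae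
      (Filter.Eventually.of_forall fun t ht => eqOn_cot_half_mul_sin_nat_mul k ht),
    intervalIntegral.integral_finsetSum fun j _ => by
      apply Continuous.intervalIntegrable; fun_prop]
  simp [hsummand, Nat.pos_of_ne_zero hk]

theorem integral_cos_nat_mul_add_eq_zero {n : ℕ} (hn : n ≠ 0) (α : ℝ) :
    ∫ φ in (0 : ℝ)..(2 * π), cos (n * φ + α) = 0 := by
  rw [intervalIntegral.integral_comp_mul_add (fun x => cos x) (Nat.cast_ne_zero.mpr hn),
    integral_cos, mul_zero, zero_add, add_comm, sin_add_nat_mul_two_pi, sub_self, smul_zero]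

section HilbertTransform

variable {E : Type*} [NormedAddCommGroup E] [NormedSpace ℝ E]

/-- The symmetrized integral defining `HilV` converges absolutely and has value `G`, so that
`HilV F = G` is not a junk-value identity. -/
def HasHilbertTransform (F G : ℝ → E) : Prop :=
  ∀ θ, IntervalIntegrable (fun t => cot (t / 2) • (F (θ - t) - F (θ + t))) volume 0 π ∧
    (1 / (2 * π)) • ∫ t in (0 : ℝ)..π, cot (t / 2) • (F (θ - t) - F (θ + t)) = G θ

theorem hasHilbertTransform_zero : HasHilbertTransform (0 : ℝ → E) 0 := by
  intro θ
  simp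

namespace HasHilbertTransform

variable {F G F' G' : ℝ → E}

theorem add (h : HasHilbertTransform F G) (h' : HasHilbertTransform F' G') :
    HasHilbertTransform (F + F') (G + G') := by
  intro θ
  have hsplit : (fun t => cot (t / 2) • ((F + F') (θ - t) - (F + F') (θ + t))) =
      fun t => cot (t / 2) • (F (θ - t) - F (θ + t)) +
        cot (t / 2) • (F' (θ - t) - F' (θ + t)) := by
    funext t
    rw [Pi.add_apply, Pi.add_apply, add_sub_add_comm, smul_add]
  rw [hsplit, intervalIntegral.integral_add (h θ).1 (h' θ).1, smul_add, (h θ).2, (h' θ).2]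
  exact ⟨(h θ).1.add (h' θ).1, rfl⟩

theorem const_smul (h : HasHilbertTransform F G) (c : ℝ) :
    HasHilbertTransform (c • F) (c • G) := by
  intro θ
  have hpull : (fun t => cot (t / 2) • ((c • F) (θ - t) - (c • F) (θ + t))) =
      fun t => c • cot (t / 2) • (F (θ - t) - F (θ + t)) := by
    funext t
    rw [Pi.smul_apply, Pi.smul_apply, ← smul_sub, smul_comm]
  rw [hpull, intervalIntegral.integral_smul, smul_comm, (h θ).2]
  exact ⟨(h θ).1.smul c, rfl⟩

theorem smul_const [CompleteSpace E] {f g : ℝ → ℝ} (h : HasHilbertTransform f g) (v : E) :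
    HasHilbertTransform (fun φ => f φ • v) (fun θ => g θ • v) := by
  intro θ
  have hpull : (fun t => cot (t / 2) • (f (θ - t) • v - f (θ + t) • v)) =
      fun t => (cot (t / 2) • (f (θ - t) - f (θ + t))) • v := by
    funext t
    rw [← sub_smul, smul_smul, smul_eq_mul]
  rw [hpull, intervalIntegral.integral_smul_const, smul_smul, ← smul_eq_mul, (h θ).2]
  exact ⟨⟨(h θ).1.1.smul_const v, (h θ).1.2.smul_const v⟩, rfl⟩

end HasHilbertTransform

end HilbertTransform

theorem hasHilbertTransform_cos_nat_mul_add {k : ℕ} (hk : k ≠ 0) (α : ℝ) :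
    HasHilbertTransform (fun φ => cos (k * φ + α)) (fun θ => sin (k * θ + α)) := by
  intro θ
  have hkernel : (fun t => cot (t / 2) • (cos (k * (θ - t) + α) - cos (k * (θ + t) + α))) =
      fun t => 2 * sin (k * θ + α) * (cot (t / 2) * sin (k * t)) := by
    funext t
    rw [smul_eq_mul, show k * (θ - t) + α = (k * θ + α) - k * t by ring,
      show k * (θ + t) + α = (k * θ + α) + k * t by ring, cos_sub, cos_add (k * θ + α)]
    ring
  rw [hkernel, intervalIntegral.integral_const_mul, integral_cot_half_mul_sin_nat_mul hk,
    smul_eq_mul]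
  refine ⟨(intervalIntegrable_cot_half_mul_sin_nat_mul k).const_mul _, ?_⟩
  field_simp

/-- The factor `k` lets this hold for `k = 0` too, where the transform of a constant is `0`. -/
theorem hasHilbertTransform_natCast_mul_cos (k : ℕ) (α : ℝ) :
    HasHilbertTransform (fun φ => k * cos (k * φ + α)) (fun θ => k * sin (k * θ + α)) := by
  rcases eq_or_ne k 0 with rfl | hk
  · convert (hasHilbertTransform_zero : HasHilbertTransform (0 : ℝ → ℝ) 0) using 1 <;>
      funext <;> simp
  · exact (hasHilbertTransform_cos_nat_mul_add hk α).const_smul (k : ℝ)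

theorem hasHilbertTransform_natCast_mul_sin (k : ℕ) (α : ℝ) :
    HasHilbertTransform (fun φ => k * sin (k * φ + α)) (fun θ => -(k * cos (k * θ + α))) := by
  convert hasHilbertTransform_natCast_mul_cos k (α - π / 2) using 2 with φ θ
  · rw [← add_sub_assoc, cos_sub_pi_div_two]
  · rw [← add_sub_assoc, sin_sub_pi_div_two, mul_neg]

theorem withLp_equiv_symm_pair (a b : ℝ) :
    (WithLp.equiv 2 (Fin 2 → ℝ)).symm ![a, b] =
      a • EuclideanSpace.single 0 1 + b • EuclideanSpace.single 1 1 := by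
  ext i
  fin_cases i <;> simp

theorem inner_withLp_equiv_symm_pair (a b c d : ℝ) :
    inner ℝ ((WithLp.equiv 2 (Fin 2 → ℝ)).symm ![a, b])
      ((WithLp.equiv 2 (Fin 2 → ℝ)).symm ![c, d]) = a * c + b * d := by
  simp [PiLp.inner_apply, Fin.sum_univ_two]
  ring

theorem HasHilbertTransform.pair {P Q HP HQ : ℝ → ℝ} (hP : HasHilbertTransform P HP)
    (hQ : HasHilbertTransform Q HQ) :
    HasHilbertTransform (fun φ => (WithLp.equiv 2 (Fin 2 → ℝ)).symm ![P φ, Q φ])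
      (fun θ => (WithLp.equiv 2 (Fin 2 → ℝ)).symm ![HP θ, HQ θ]) := by
  simp_rw [withLp_equiv_symm_pair]
  exact (hP.smul_const _).add (hQ.smul_const _)

theorem HasHilbertTransform.hilV_eq {F G : ℝ → E2} (h : HasHilbertTransform F G) (θ : ℝ) :
    HilV F θ = G θ :=
  (h θ).2

theorem hasDerivAt_dXc (θ : ℝ) : HasDerivAt dXc (-Xc θ) θ := by
  have hdXc :
      dXc = fun φ => -sin φ • EuclideanSpace.single 0 1 + cos φ • EuclideanSpace.single 1 1 :=
    funext fun φ => by rw [dXc, withLp_equiv_symm_pair]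
  rw [hdXc, Xc, withLp_equiv_symm_pair, neg_add, ← neg_smul, ← neg_smul]
  exact ((hasDerivAt_sin θ).neg.smul_const _).add ((hasDerivAt_cos θ).smul_const _)

theorem deriv_smul_dXc {σ σ' : ℝ → ℝ} (hσ : ∀ x, HasDerivAt σ (σ' x) x) (φ : ℝ) :
    deriv (fun ψ => σ ψ • dXc ψ) φ = (WithLp.equiv 2 (Fin 2 → ℝ)).symm
      ![-(σ' φ * sin φ) - σ φ * cos φ, σ' φ * cos φ - σ φ * sin φ] := by
  rw [((hσ φ).fun_smul (hasDerivAt_dXc φ)).deriv, dXc, Xc]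
  ext i
  fin_cases i <;> simp <;> ring

theorem L0_eq_of_hasHilbertTransform {σ σ' P Q HP HQ : ℝ → ℝ}
    (hσ : ∀ x, HasDerivAt σ (σ' x) x) (hP : HasHilbertTransform P HP)
    (hQ : HasHilbertTransform Q HQ) (hPσ : ∀ φ, P φ = -(σ' φ * sin φ) - σ φ * cos φ)
    (hQσ : ∀ φ, Q φ = σ' φ * cos φ - σ φ * sin φ) (θ : ℝ) :
    L0 σ θ = -(1 / 4) * (HQ θ * cos θ - HP θ * sin θ) +
      (1 / (8 * π)) * ∫ φ in (0 : ℝ)..(2 * π), σ φ := by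
  have hF : (fun φ => deriv (fun ψ => σ ψ • dXc ψ) φ) =
      fun φ => (WithLp.equiv 2 (Fin 2 → ℝ)).symm ![P φ, Q φ] := by
    funext φ
    rw [deriv_smul_dXc hσ, hPσ, hQσ]
  rw [L0, hF, (hP.pair hQ).hilV_eq, dXc, inner_withLp_equiv_symm_pair]
  ring

theorem L0_cos_nat_mul_add {n : ℕ} (hn : n ≠ 0) (α θ : ℝ) :
    L0 (fun φ => cos (n * φ + α)) θ = -(n / 4) * cos (n * θ + α) := by
  obtain ⟨m, rfl⟩ := Nat.exists_eq_succ_of_ne_zero hn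
  have hσ (x : ℝ) : HasDerivAt (fun φ => cos ((m + 1 : ℕ) * φ + α))
      (-(sin ((m + 1 : ℕ) * x + α) * (m + 1 : ℕ))) x := by
    simpa using (((hasDerivAt_id x).const_mul ((m + 1 : ℕ) : ℝ)).add_const α).cos
  have hP := ((hasHilbertTransform_natCast_mul_cos m α).const_smul (1 / 2)).add
    ((hasHilbertTransform_natCast_mul_cos (m + 2) α).const_smul (-1 / 2))
  have hQ := ((hasHilbertTransform_natCast_mul_sin m α).const_smul (-1 / 2)).add
    ((hasHilbertTransform_natCast_mul_sin (m + 2) α).const_smul (-1 / 2))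
  have hlow (y : ℝ) : (m : ℝ) * y + α = ((m : ℝ) + 1) * y + α - y := by ring
  have hhigh (y : ℝ) : ((m : ℝ) + 2) * y + α = ((m : ℝ) + 1) * y + α + y := by ring
  rw [L0_eq_of_hasHilbertTransform hσ hP hQ (fun φ => ?_) (fun φ => ?_),
    integral_cos_nat_mul_add_eq_zero hn]
  all_goals
    simp only [Pi.add_apply, Pi.smul_apply, smul_eq_mul]
    push_cast
    rw [hlow, hhigh]
    generalize ((m : ℝ) + 1) * _ + α = x
    simp only [sin_add, cos_add, sin_sub, cos_sub]
  · linear_combination (-(m + 1) * cos x / 4) * sin_sq_add_cos_sq θ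
  · ring
  · ring

theorem L0_one (θ : ℝ) : L0 (fun _ => 1) θ = 0 := by
  have hP := (hasHilbertTransform_natCast_mul_cos 1 0).const_smul (-1)
  have hQ := (hasHilbertTransform_natCast_mul_sin 1 0).const_smul (-1)
  rw [L0_eq_of_hasHilbertTransform (fun x => hasDerivAt_const x 1) hP hQ (fun φ => ?_)
    (fun φ => ?_)]
  all_goals simp
  field_simp
  linear_combination (-8) * sin_sq_add_cos_sq θ

/-- for every `n ≥ 1`, `L₀(sin nθ) = −(n/4)sin nθ` and
`L₀(cos nθ) = −(n/4)cos nθ`; also `L₀1 = 0`. -/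
theorem stmt13 :
    (∀ n : ℕ, 1 ≤ n → ∀ θ : ℝ,
      L0 (fun φ => Real.sin (n * φ)) θ = -((n : ℝ) / 4) * Real.sin (n * θ) ∧
      L0 (fun φ => Real.cos (n * φ)) θ = -((n : ℝ) / 4) * Real.cos (n * θ)) ∧
    (∀ θ : ℝ, L0 (fun _ => 1) θ = 0) := by
  refine ⟨fun n hn θ => ⟨?_, ?_⟩, L0_one⟩
  · have h := L0_cos_nat_mul_add (Nat.one_le_iff_ne_zero.mp hn) (-(π / 2)) θ
    simp only [← sub_eq_add_neg, cos_sub_pi_div_two] at h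
    exact h
  · simpa using L0_cos_nat_mul_add (Nat.one_le_iff_ne_zero.mp hn) 0 θ

end
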